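/- arXiv:2509.23283 — 2 statements merged into one kernel-verified Lean document; each statement's English description precedes it below -/
import Mathlib

section
/- The natural density of square-free positive integers is 6/π², i.e., the limit as N → ∞ of #{n ≤ N : n square-free}/N equals 6/π². -/
open Filter Topology Real Finset
open scoped ArithmeticFunction.Moebius

/-!
Writing `n = b² a` with `a` squarefree, `d² ∣ n` holds exactly when `d ∣ b`, so
`∑_{d² ∣ n} μ d = ∑_{d ∣ b} μ d` is the indicator of `b = 1`, i.e. of `n` being squarefree.
Summing over `n ≤ N` and swapping the sums gives `#{n ≤ N squarefree} = ∑_{d ≤ N} μ d ⌊N / d²⌋`.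
After division by `N`, the `d`-th term tends to `μ d / d²` and is bounded by `1 / d²`, so by
dominated convergence the density is `∑ μ d / d² = 1 / ζ(2) = 6 / π²`.
-/

theorem Nat.sq_dvd_sq_mul_iff {a b d : ℕ} (ha : Squarefree a) :
    d ^ 2 ∣ b ^ 2 * a ↔ d ∣ b := by
  refine ⟨fun h => ?_, fun h => dvd_mul_of_dvd_left (pow_dvd_pow_of_dvd h 2) a⟩
  rcases eq_or_ne b 0 with rfl | hb
  · exact dvd_zero d
  have hd : d ≠ 0 := by rintro rfl; simp [hb, ha.ne_zero] at h
  have hba : b ^ 2 * a ≠ 0 := mul_ne_zero (pow_ne_zero 2 hb) ha.ne_zero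
  rw [← Nat.factorization_le_iff_dvd (pow_ne_zero 2 hd) hba] at h
  rw [← Nat.factorization_le_iff_dvd hd hb]
  intro p
  have hp := h p
  have ha1 := (Nat.squarefree_iff_factorization_le_one ha.ne_zero).mp ha p
  simp only [Nat.factorization_mul (pow_ne_zero 2 hb) ha.ne_zero, Nat.factorization_pow,
    Finsupp.add_apply, Finsupp.smul_apply, smul_eq_mul] at hp
  omega

theorem Nat.cast_div_div_le (N k : ℕ) : ((N / k : ℕ) : ℝ) / N ≤ 1 / k := by
  rcases eq_or_ne N 0 with rfl | hN
  · simp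
  calc ((N / k : ℕ) : ℝ) / N ≤ ((N : ℝ) / k) / N := by gcongr; exact Nat.cast_div_le
    _ = 1 / k := by field_simp

theorem Nat.tendsto_cast_div_div_atTop (k : ℕ) :
    Tendsto (fun N : ℕ => ((N / k : ℕ) : ℝ) / N) atTop (𝓝 (1 / k)) := by
  rcases eq_or_ne k 0 with rfl | hk
  · simp
  have hfloor : Tendsto (fun N : ℕ => (⌊(N : ℝ) / k⌋₊ : ℝ) / ((N : ℝ) / k) * (1 / k))
      atTop (𝓝 (1 * (1 / k))) :=
    (tendsto_nat_floor_div_atTop.comp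
      (tendsto_natCast_atTop_atTop.atTop_div_const (by positivity))).mul_const _
  rw [one_mul] at hfloor
  refine hfloor.congr' ?_
  filter_upwards [eventually_ne_atTop 0] with N hN
  rw [Nat.floor_div_eq_div]
  field_simp

theorem Nat.filter_Icc_sq_dvd_eq_filter_divisors {N n : ℕ} (hn : n ∈ Icc 1 N) :
    {d ∈ Icc 1 N | d ^ 2 ∣ n} = {d ∈ n.divisors | d ^ 2 ∣ n} := by
  rw [mem_Icc] at hn
  ext d
  simp only [mem_filter, mem_Icc, Nat.mem_divisors, and_congr_left_iff]
  intro hd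
  have hdn : d ∣ n := (Dvd.intro_left _ rfl).trans hd
  have := Nat.le_of_dvd hn.1 hdn
  have := Nat.pos_of_dvd_of_pos hdn hn.1
  omega

namespace ArithmeticFunction

theorem sum_divisors_moebius (n : ℕ) :
    ∑ d ∈ n.divisors, μ d = if n = 1 then 1 else 0 := by
  rw [← coe_zeta_mul_apply, coe_zeta_mul_moebius, one_apply]

theorem sum_divisors_sq_dvd_moebius {n : ℕ} (hn : n ≠ 0) :
    ∑ d ∈ n.divisors with d ^ 2 ∣ n, μ d = if Squarefree n then 1 else 0 := by
  obtain ⟨a, b, rfl, ha⟩ := Nat.sq_mul_squarefree n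
  have hb : b ≠ 0 := by rintro rfl; simp at hn
  have hfilter : {d ∈ (b ^ 2 * a).divisors | d ^ 2 ∣ b ^ 2 * a} = b.divisors := by
    ext d
    simp only [mem_filter, Nat.mem_divisors, Nat.sq_dvd_sq_mul_iff ha]
    exact ⟨fun h => ⟨h.2, hb⟩, fun h => ⟨⟨h.1.trans ⟨b * a, by ring⟩, hn⟩, h.1⟩⟩
  have hsq : Squarefree (b ^ 2 * a) ↔ b = 1 := by
    refine ⟨fun h => Nat.isUnit_iff.mp (h b ⟨a, by ring⟩), ?_⟩
    rintro rfl
    simpa using ha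
  rw [hfilter, sum_divisors_moebius]
  exact if_congr hsq.symm rfl rfl

theorem card_squarefree_Icc_eq_sum_moebius (N : ℕ) :
    (#{n ∈ Icc 1 N | Squarefree n} : ℤ) = ∑ d ∈ Icc 1 N, μ d * (N / d ^ 2 : ℕ) := by
  calc (#{n ∈ Icc 1 N | Squarefree n} : ℤ)
      = ∑ n ∈ Icc 1 N, ∑ d ∈ Icc 1 N, if d ^ 2 ∣ n then μ d else 0 := by
        rw [natCast_card_filter]
        refine sum_congr rfl fun n hn => ?_
        rw [← sum_filter, Nat.filter_Icc_sq_dvd_eq_filter_divisors hn,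
          sum_divisors_sq_dvd_moebius (by rw [mem_Icc] at hn; omega)]
    _ = ∑ d ∈ Icc 1 N, μ d * #{n ∈ Ioc 0 N | d ^ 2 ∣ n} := by
        rw [sum_comm]
        refine sum_congr rfl fun d _ => ?_
        rw [← sum_filter, sum_const, nsmul_eq_mul, mul_comm]
        rfl
    _ = ∑ d ∈ Icc 1 N, μ d * (N / d ^ 2 : ℕ) := by
        simp only [Nat.Ioc_filter_dvd_card_eq_div]

theorem card_squarefree_Icc_div_eq_tsum (N : ℕ) :
    (#{n ∈ Icc 1 N | Squarefree n} : ℝ) / N =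
      ∑' d : ℕ, (μ d : ℝ) * (((N / d ^ 2 : ℕ) : ℝ) / N) := by
  have hcount := congrArg (Int.cast : ℤ → ℝ) (card_squarefree_Icc_eq_sum_moebius N)
  simp only [Int.cast_sum, Int.cast_mul, Int.cast_natCast] at hcount
  rw [hcount, sum_div, tsum_eq_sum (s := Icc 1 N)]
  · simp only [mul_div_assoc]
  intro d hd
  rcases eq_or_ne d 0 with rfl | hd0
  · simp
  have hNd : N < d ^ 2 := by
    simp only [mem_Icc, not_and, not_le] at hd
    nlinarith [hd (by omega)]
  simp [Nat.div_eq_of_lt hNd]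

theorem LSeries_moebius_eq_inv_riemannZeta {s : ℂ} (hs : 1 < s.re) :
    LSeries (fun n => μ n) s = (riemannZeta s)⁻¹ := by
  rw [← LSeries_zeta_eq_riemannZeta hs]
  exact (inv_eq_of_mul_eq_one_right (LSeries_zeta_mul_Lseries_moebius hs)).symm

theorem tsum_moebius_div_sq : ∑' n : ℕ, (μ n : ℝ) / (n : ℝ) ^ 2 = 6 / π ^ 2 := by
  have hL := LSeries_moebius_eq_inv_riemannZeta (s := 2) (by norm_num)
  rw [riemannZeta_two, LSeries] at hL
  have hterm (n : ℕ) :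
      LSeries.term (fun n => (μ n : ℂ)) 2 n = (((μ n : ℝ) / (n : ℝ) ^ 2 : ℝ) : ℂ) := by
    rcases eq_or_ne n 0 with rfl | hn
    · simp
    · rw [LSeries.term_of_ne_zero hn, ← Nat.cast_ofNat, Complex.cpow_natCast]
      push_cast
      rfl
  rw [tsum_congr hterm, ← Complex.ofReal_tsum] at hL
  apply Complex.ofReal_injective
  rw [hL]
  push_cast
  ring

end ArithmeticFunction

open ArithmeticFunction

/-- The natural density of square-free positive integers is `6/π²`. -/
theorem squarefree_density :
    Tendsto (fun N : ℕ =>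
        (((Finset.Icc 1 N).filter (fun n => Squarefree n)).card : ℝ) / (N : ℝ))
      atTop (𝓝 (6 / Real.pi ^ 2)) := by
  have hbound (N d : ℕ) : ‖(μ d : ℝ) * (((N / d ^ 2 : ℕ) : ℝ) / N)‖ ≤ 1 / (d : ℝ) ^ 2 := by
    have hratio : ((N / d ^ 2 : ℕ) : ℝ) / N ≤ 1 / (d : ℝ) ^ 2 := by
      exact_mod_cast Nat.cast_div_div_le N (d ^ 2)
    rw [norm_mul, Real.norm_eq_abs, Real.norm_of_nonneg (by positivity)]
    exact (mul_le_of_le_one_left (by positivity) (mod_cast abs_moebius_le_one)).trans hratio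
  have hlim : Tendsto (fun N : ℕ => ∑' d : ℕ, (μ d : ℝ) * (((N / d ^ 2 : ℕ) : ℝ) / N))
      atTop (𝓝 (∑' d : ℕ, (μ d : ℝ) * (1 / (d : ℝ) ^ 2))) :=
    tendsto_tsum_of_dominated_convergence (bound := fun d : ℕ => 1 / (d : ℝ) ^ 2)
      (Real.summable_one_div_nat_pow.mpr one_lt_two)
      (fun d => by exact_mod_cast (Nat.tendsto_cast_div_div_atTop (d ^ 2)).const_mul _)
      (Eventually.of_forall (hbound ·))
  simp only [mul_one_div, tsum_moebius_div_sq] at hlim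
  simpa only [card_squarefree_Icc_div_eq_tsum] using hlim
end

section
/- Let Λ = λ·⟨1, τ⟩ ⊂ ℂ be a lattice with λ ∈ ℂ*, Im(τ) > 0, and let Λ' be a lattice containing Λ with index p (p prime). Then either Λ' = (λ/p)·⟨1, pτ⟩, or Λ' = λ·⟨1, (τ+k)/p⟩ for some k ∈ {0, 1, …, p−1}. -/
/-!
If `Λ ≤ Λ'` has prime index `p`, then `p • Λ' ≤ Λ`, so any `v ∈ Λ' \ Λ` satisfies
`p • v = a • λ + b • λτ` with `a, b ∈ ℤ`. If `p ∣ b`, then `v ≡ a • (λ/p)` modulo `Λ` with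
`p ∤ a`, so `λ/p ∈ Λ'`; otherwise pick `k < p` with `a ≡ b k (mod p)`, so that
`v ≡ b • λ(τ+k)/p` modulo `Λ` with `p ∤ b`. Either way the candidate lattice lies between `Λ`
and `Λ'` and contains `v ∉ Λ`, so it is `Λ'` because the index `p` has no proper factorization.
-/

open AddSubgroup

theorem Int.exists_lt_dvd_sub_mul_of_not_dvd {p : ℕ} (hp : p.Prime) {b : ℤ}
    (hb : ¬ (p : ℤ) ∣ b) (a : ℤ) : ∃ k : ℕ, k < p ∧ (p : ℤ) ∣ a - b * k := by
  have := Fact.mk hp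
  have hb0 : (b : ZMod p) ≠ 0 := (ZMod.intCast_zmod_eq_zero_iff_dvd b p).not.2 hb
  refine ⟨((a : ZMod p) / b).val, ZMod.val_lt _, (ZMod.intCast_zmod_eq_zero_iff_dvd _ _).1 ?_⟩
  push_cast
  rw [ZMod.natCast_zmod_val, mul_div_cancel₀ _ hb0, sub_self]

namespace AddSubgroup

variable {G : Type*} [AddCommGroup G]

theorem mem_of_zsmul_mem_of_isCoprime {S : AddSubgroup G} {x : G} {m n : ℤ}
    (hm : m • x ∈ S) (hn : n • x ∈ S) (hmn : IsCoprime m n) : x ∈ S := by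
  obtain ⟨u, w, huw⟩ := hmn
  have hx : x = u • m • x + w • n • x := by
    rw [smul_smul, smul_smul, ← add_smul, huw, one_smul]
  rw [hx]
  exact add_mem (zsmul_mem hm u) (zsmul_mem hn w)

theorem eq_of_le_of_relIndex_prime {H T K : AddSubgroup G} {p : ℕ} (hp : p.Prime)
    (hidx : H.relIndex K = p) (hHT : H ≤ T) (hTK : T ≤ K) {v : G} (hvT : v ∈ T)
    (hvH : v ∉ H) : T = K := by
  have hmul := relIndex_mul_relIndex H T K hHT hTK
  rw [hidx] at hmul
  rcases Nat.prime_mul_iff.1 (hmul ▸ hp) with ⟨-, hTK1⟩ | ⟨-, hHT1⟩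
  · exact le_antisymm hTK (relIndex_eq_one.1 hTK1)
  · exact absurd (relIndex_eq_one.1 hHT1 hvT) hvH

variable [IsAddTorsionFree G] {p : ℕ} {e f v : G} {K : AddSubgroup G}

theorem eq_closure_pair_of_nsmul_eq_left (hp : p.Prime) (hle : closure {e, f} ≤ K)
    (hidx : (closure {e, f}).relIndex K = p) (hvK : v ∈ K) (hvH : v ∉ closure {e, f})
    {w : G} (hw : p • w = e) {a b : ℤ}
    (hv : p • v = a • e + ((p : ℤ) * b) • f) : K = closure {w, f} := by
  have he : e ∈ closure {w, f} := hw ▸ nsmul_mem (subset_closure (by simp)) p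
  have hf : f ∈ closure {w, f} := subset_closure (by simp)
  have hvw : v = a • w + b • f := by
    apply nsmul_right_injective hp.ne_zero
    simp only [hv, ← hw]
    module
  have ha : ¬ (p : ℤ) ∣ a := by
    rintro ⟨a', rfl⟩
    refine hvH (mem_closure_pair.2 ⟨a', b, ?_⟩)
    rw [hvw, ← hw]
    module
  have hwK : w ∈ K := by
    refine mem_of_zsmul_mem_of_isCoprime (m := p) (n := a) ?_ ?_
      ((Nat.prime_iff_prime_int.1 hp).coprime_iff_not_dvd.2 ha)
    · rw [natCast_zsmul, hw]
      exact hle (subset_closure (by simp))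
    · rw [show a • w = v - b • f by rw [hvw]; abel]
      exact sub_mem hvK (zsmul_mem (hle (subset_closure (by simp))) b)
  refine (eq_of_le_of_relIndex_prime hp hidx ?_ ?_ ?_ hvH).symm
  · exact (closure_le _).2 (Set.pair_subset he hf)
  · exact (closure_le _).2 (Set.pair_subset hwK (hle (subset_closure (by simp))))
  · exact hvw ▸ mem_closure_pair.2 ⟨a, b, rfl⟩

theorem eq_closure_pair_of_nsmul_eq_right (hp : p.Prime) (hle : closure {e, f} ≤ K)
    (hidx : (closure {e, f}).relIndex K = p) (hvK : v ∈ K) (hvH : v ∉ closure {e, f})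
    {w : G} {k : ℤ} (hw : p • w = k • e + f) {a b : ℤ} (hv : p • v = a • e + b • f)
    (hb : ¬ (p : ℤ) ∣ b) (hk : (p : ℤ) ∣ a - b * k) :
    K = closure {e, w} := by
  obtain ⟨g, hg⟩ := hk
  have he : e ∈ closure {e, w} := subset_closure (by simp)
  have hw' : w ∈ closure {e, w} := subset_closure (by simp)
  have hvw : v = g • e + b • w := by
    apply nsmul_right_injective hp.ne_zero
    simp only [hv, smul_add, smul_comm p b w, hw, eq_add_of_sub_eq hg]
    module
  have hwK : w ∈ K := by
    refine mem_of_zsmul_mem_of_isCoprime (m := p) (n := b) ?_ ?_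
      ((Nat.prime_iff_prime_int.1 hp).coprime_iff_not_dvd.2 hb)
    · rw [natCast_zsmul, hw]
      exact hle (add_mem (zsmul_mem (subset_closure (by simp)) k) (subset_closure (by simp)))
    · rw [show b • w = v - g • e by rw [hvw]; abel]
      exact sub_mem hvK (zsmul_mem (hle (subset_closure (by simp))) g)
  have hf : f ∈ closure {e, w} := by
    rw [show f = p • w - k • e by rw [hw]; abel]
    exact sub_mem (nsmul_mem hw' p) (zsmul_mem he k)
  refine (eq_of_le_of_relIndex_prime hp hidx ?_ ?_ ?_ hvH).symm
  · exact (closure_le _).2 (Set.pair_subset he hf)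
  · exact (closure_le _).2 (Set.pair_subset (hle (subset_closure (by simp))) hwK)
  · exact hvw ▸ mem_closure_pair.2 ⟨g, b, rfl⟩

end AddSubgroup

theorem sublattice_index_p_classification_general (p : ℕ) (hp : p.Prime)
    (lam τ : ℂ) (Λ' : AddSubgroup ℂ)
    (hle : AddSubgroup.closure {lam, lam * τ} ≤ Λ')
    (hidx : (AddSubgroup.closure {lam, lam * τ}).relIndex Λ' = p) :
    Λ' = AddSubgroup.closure {lam / p, lam * τ} ∨
      ∃ k : ℕ, k < p ∧ Λ' = AddSubgroup.closure {lam, lam * (τ + k) / p} := by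
  have hp0 : (p : ℂ) ≠ 0 := Nat.cast_ne_zero.2 hp.ne_zero
  obtain ⟨v, hvK, hvH⟩ := SetLike.not_le_iff_exists.1 fun h ↦
    hp.ne_one (hidx.symm.trans (relIndex_eq_one.2 h))
  obtain ⟨a, b, hab⟩ := mem_closure_pair.1 (hidx ▸ nsmul_relIndex_mem _ hvK)
  by_cases hb : (p : ℤ) ∣ b
  · obtain ⟨b, rfl⟩ := hb
    refine .inl (eq_closure_pair_of_nsmul_eq_left hp hle hidx hvK hvH ?_ hab.symm)
    rw [nsmul_eq_mul, mul_div_cancel₀ _ hp0]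
  · obtain ⟨k, hkp, hk⟩ := Int.exists_lt_dvd_sub_mul_of_not_dvd hp hb a
    refine .inr ⟨k, hkp,
      eq_closure_pair_of_nsmul_eq_right hp hle hidx hvK hvH ?_ hab.symm hb hk⟩
    rw [nsmul_eq_mul, mul_div_cancel₀ _ hp0, natCast_zsmul, nsmul_eq_mul]
    ring

/-- If `Λ = λ·⟨1, τ⟩` with `λ ≠ 0`, `Im τ > 0`, and `Λ'` is a lattice containing `Λ`
with index `p` (prime), then `Λ' = (λ/p)·⟨1, pτ⟩` or `Λ' = λ·⟨1, (τ+k)/p⟩` for some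
`0 ≤ k < p`. -/
theorem sublattice_index_p_classification (p : ℕ) (hp : p.Prime)
    (lam τ : ℂ) (hlam : lam ≠ 0) (hτ : 0 < τ.im) (Λ' : AddSubgroup ℂ)
    (hle : AddSubgroup.closure {lam, lam * τ} ≤ Λ')
    (hidx : (AddSubgroup.closure {lam, lam * τ}).relIndex Λ' = p) :
    Λ' = AddSubgroup.closure {lam / p, lam * τ} ∨
      ∃ k : ℕ, k < p ∧ Λ' = AddSubgroup.closure {lam, lam * (τ + k) / p} :=
  sublattice_index_p_classification_general p hp lam τ Λ' hle hidx
end
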